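/- Let Φ ∈ ℚ[[x,s]] be the unique formal power series with exp(x + sΦ) = 1 + x + (s+1)·Φ. Suppose Ψ₁ ∈ ℚ[[x,s]] satisfies ∂Ψ₁/∂s = (1/2)·( ∂Φ/∂x + 2Φ·∂Ψ₁/∂x ) with initial condition Ψ₁|_{s=0} = 0. Then Ψ₁ = −(1/2)·log( 1 − s·( x + (s+1)·Φ ) ), where log(1−u) := −Σ_{k≥1} u^k/k (well defined since s·(x + (s+1)Φ) has zero constant coefficient). -/

import Mathlib

/-- Formal partial derivative `∂f/∂x_i` of a multivariate formal power series. -/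
noncomputable def pd {σ : Type*} (R : Type*) [CommSemiring R]
    (i : σ) (f : MvPowerSeries σ R) : MvPowerSeries σ R :=
  fun m => (((m i) + 1 : ℕ) : R) * MvPowerSeries.coeff (R := R) (m + Finsupp.single i 1) f

/-- Total degree of a monomial. -/
def mdeg {σ : Type*} (m : σ →₀ ℕ) : ℕ := m.sum fun _ e => e

/-- `exp f = Σ_{k≥0} f^k/k!` for `f` with zero constant coefficient, computed
coefficientwise: since `f^k` has order `≥ k`, only `k ≤ deg m` contribute to the
coefficient at a monomial `m`. -/
noncomputable def expS {σ R : Type*} [CommRing R] [Algebra ℚ R]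
    (f : MvPowerSeries σ R) : MvPowerSeries σ R :=
  fun m => MvPowerSeries.coeff (R := R) m
    (∑ k ∈ Finset.range (mdeg m + 1), ((k.factorial : ℚ)⁻¹) • f ^ k)

/-- `log(1 − u) = −Σ_{k≥1} u^k/k` for `u` with zero constant coefficient, computed
coefficientwise: since `u^k` has order `≥ k`, only `k ≤ deg m` contribute. -/
noncomputable def logOneSubS {σ R : Type*} [CommRing R] [Algebra ℚ R]
    (u : MvPowerSeries σ R) : MvPowerSeries σ R :=
  fun m => MvPowerSeries.coeff (R := R) m
    (- ∑ k ∈ Finset.Icc 1 (mdeg m), ((k : ℚ)⁻¹) • u ^ k)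

/-!
Write `w = x + (s+1)Φ` and `u = s w`, so that the defining equation of `Φ` reads
`exp(x + sΦ) = 1 + w`. Differentiating it gives `(1 - u) Φ_x = w` and `(1 - u) Φ_s = Φ w`,
hence the inviscid Burgers equation `Φ_s = Φ Φ_x`. Together with `(1 - u) ∂log(1 - u) = -∂u`
the same relations show that `Ψ = -½ log(1 - u)` satisfies `Ψ_s - Φ Ψ_x = ½ Φ_x`. The difference
of `Ψ₁` and `Ψ` then solves the transport equation `D_s = Φ D_x` and vanishes at `s = 0`, and
comparing coefficients of `sⁿ` for increasing `n` shows that it vanishes.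

The series `exp` and `log(1 - ·)` of the statement are composites `A ∘ f` of a univariate series
`A` with `f`; coefficientwise these only involve truncations of `A`, so the chain rule for them
reduces to the chain rule for polynomials.
-/

open MvPowerSeries Finsupp

namespace MvPowerSeries

section
variable {σ R : Type*} [CommRing R]

theorem pd_eq_pderiv (i : σ) : pd R i = pderiv R i := by
  funext f
  ext m
  rw [coeff_pderiv]
  simp only [pd, MvPowerSeries.coeff_apply]
  push_cast
  ring

theorem isUnit_one_sub_X_mul (j : σ) (g : MvPowerSeries σ R) : IsUnit (1 - X j * g) := by
  simp [isUnit_iff_constantCoeff]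

theorem X_pow_dvd_pderiv {i j : σ} (hij : i ≠ j) {n : ℕ} {f : MvPowerSeries σ R}
    (hf : X j ^ n ∣ f) : X j ^ n ∣ pderiv R i f := by
  obtain ⟨g, rfl⟩ := hf
  rw [Derivation.leibniz, pderiv_pow, pderiv_X_of_ne hij.symm, mul_zero, smul_zero, add_zero]
  exact dvd_mul_right _ _

theorem eq_zero_of_pderiv_eq_mul_pderiv [IsAddTorsionFree R] {i j : σ} (hij : i ≠ j)
    {Φ D : MvPowerSeries σ R} (hD : pderiv R j D = Φ * pderiv R i D) (h0 : X j ∣ D) : D = 0 := by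
  -- The coefficient of `D` at `m' + single j 1` is, up to the factor `m' j + 1`, the coefficient
  -- of `Φ * pderiv R i D` at `m'`, and `pderiv R i` preserves divisibility by powers of `X j`.
  have hdvd : ∀ n, X j ^ (n + 1) ∣ D := by
    intro n
    induction n with
    | zero => rwa [zero_add, pow_one]
    | succ n ih =>
      refine X_pow_dvd_iff.mpr fun m hm => ?_
      rcases Nat.lt_succ_iff_lt_or_eq.mp hm with hm | hm
      · exact X_pow_dvd_iff.mp ih m hm
      obtain ⟨m', rfl⟩ : ∃ m', m = m' + single j 1 :=
        ⟨m - single j 1, (tsub_add_cancel_of_le (single_le_iff.mpr (by omega))).symm⟩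
      have hm' : m' j = n := by simpa using hm
      have hcoeff := congrArg (coeff m') hD
      rw [coeff_pderiv, X_pow_dvd_iff.mp ((X_pow_dvd_pderiv hij ih).mul_left Φ) m' (by omega),
        hm', mul_comm, ← Nat.cast_succ, ← nsmul_eq_mul] at hcoeff
      exact (smul_eq_zero.mp hcoeff).resolve_left n.succ_ne_zero
  ext m
  simpa using X_pow_dvd_iff.mp (hdvd (m j)) m (Nat.lt_succ_self _)

end

section
variable {σ R : Type*} [CommRing R] [Algebra ℚ R]

/-- `A ∘ f`, read off coefficientwise from truncations of `A`; it is the composite when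
`f` has zero constant coefficient. -/
noncomputable def compSeries (A : PowerSeries ℚ) (f : MvPowerSeries σ R) : MvPowerSeries σ R :=
  fun m => coeff m (Polynomial.aeval f (PowerSeries.trunc (m.degree + 1) A))

theorem aeval_trunc (A : PowerSeries ℚ) (f : MvPowerSeries σ R) (N : ℕ) :
    Polynomial.aeval f (PowerSeries.trunc N A) =
      ∑ k ∈ Finset.range N, PowerSeries.coeff k A • f ^ k := by
  cases N with
  | zero => simp
  | succ N =>
    rw [Polynomial.aeval_eq_sum_range' (PowerSeries.natDegree_trunc_lt A N)]
    refine Finset.sum_congr rfl fun k hk => ?_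
    rw [PowerSeries.coeff_trunc, if_pos (Finset.mem_range.mp hk)]

theorem pderiv_aeval (i : σ) (p : Polynomial ℚ) (f : MvPowerSeries σ R) :
    pderiv R i (Polynomial.aeval f p) =
      Polynomial.aeval f (Polynomial.derivative p) * pderiv R i f :=
  ((pderiv R i).restrictScalars ℚ).map_aeval p f

variable {f : MvPowerSeries σ R} (hf : constantCoeff f = 0)
include hf

theorem coeff_aeval_eq_zero_of_X_pow_dvd {p : Polynomial ℚ} {N : ℕ} (hp : Polynomial.X ^ N ∣ p)
    {m : σ →₀ ℕ} (hm : m.degree < N) : coeff m (Polynomial.aeval f p) = 0 := by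
  obtain ⟨q, rfl⟩ := hp
  rw [map_mul, map_pow, Polynomial.aeval_X]
  apply coeff_of_lt_order
  calc (m.degree : ℕ∞) < N := by exact_mod_cast hm
    _ ≤ (f ^ N).order := le_order_pow_of_constantCoeff_eq_zero N hf
    _ ≤ (f ^ N).order + (Polynomial.aeval f q).order := le_self_add
    _ ≤ _ := le_order_mul

theorem coeff_aeval_trunc_eq (A : PowerSeries ℚ) {m : σ →₀ ℕ} {N N' : ℕ} (hN : m.degree < N)
    (hN' : m.degree < N') :
    coeff m (Polynomial.aeval f (PowerSeries.trunc N A)) =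
      coeff m (Polynomial.aeval f (PowerSeries.trunc N' A)) := by
  rw [← sub_eq_zero, ← map_sub, ← map_sub]
  refine coeff_aeval_eq_zero_of_X_pow_dvd hf (N := min N N') ?_ (lt_min hN hN')
  refine Polynomial.X_pow_dvd_iff.mpr fun d hd => ?_
  rw [Polynomial.coeff_sub, PowerSeries.coeff_trunc, PowerSeries.coeff_trunc,
    if_pos (lt_min_iff.mp hd).1, if_pos (lt_min_iff.mp hd).2, sub_self]

theorem coeff_compSeries (A : PowerSeries ℚ) {m : σ →₀ ℕ} {N : ℕ} (hm : m.degree < N) :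
    coeff m (compSeries A f) = coeff m (Polynomial.aeval f (PowerSeries.trunc N A)) :=
  coeff_aeval_trunc_eq hf A (Nat.lt_succ_self _) hm

theorem coeff_compSeries_mul (A : PowerSeries ℚ) (g : MvPowerSeries σ R) {m : σ →₀ ℕ} {N : ℕ}
    (hm : m.degree < N) :
    coeff m (compSeries A f * g) = coeff m (Polynomial.aeval f (PowerSeries.trunc N A) * g) := by
  classical
  rw [coeff_mul, coeff_mul]
  refine Finset.sum_congr rfl fun p hp => ?_
  have hle : p.1.degree ≤ m.degree := by
    rw [← Finset.HasAntidiagonal.mem_antidiagonal.mp hp, map_add]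
    exact Nat.le_add_right _ _
  rw [coeff_compSeries hf A (hle.trans_lt hm)]

theorem pderiv_compSeries (i : σ) (A : PowerSeries ℚ) :
    pderiv R i (compSeries A f) = compSeries (PowerSeries.derivative ℚ A) f * pderiv R i f := by
  classical
  ext m
  have hdeg : (m + single i 1).degree = m.degree + 1 := by
    rw [map_add, degree_single]
  rw [coeff_pderiv, coeff_compSeries hf A (N := m.degree + 2) (by omega), ← coeff_pderiv,
    pderiv_aeval, ← PowerSeries.trunc_derivative,
    coeff_compSeries_mul hf _ _ (Nat.lt_succ_self _)]

theorem compSeries_mk_one_mul_one_sub : compSeries (PowerSeries.mk 1) f * (1 - f) = 1 := by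
  ext m
  rw [coeff_compSeries_mul hf _ _ (Nat.lt_succ_self _), aeval_trunc, mul_comm]
  simp only [PowerSeries.coeff_mk, Pi.one_apply, one_smul]
  rw [mul_neg_geom_sum, map_sub, coeff_of_lt_order
    ((Nat.cast_lt.mpr (Nat.lt_succ_self _)).trans_le (le_order_pow_of_constantCoeff_eq_zero _ hf)),
    sub_zero]

end

section
variable {σ R : Type*} [CommRing R] [Algebra ℚ R]

theorem expS_eq_compSeries (f : MvPowerSeries σ R) :
    expS f = compSeries (PowerSeries.exp ℚ) f := by
  ext m
  change coeff m (∑ k ∈ Finset.range (mdeg m + 1), _) =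
    coeff m (Polynomial.aeval f (PowerSeries.trunc (m.degree + 1) _))
  rw [aeval_trunc]
  simp only [PowerSeries.coeff_exp, Algebra.algebraMap_self, RingHom.id_apply, one_div]
  rfl

theorem logOneSubS_eq_neg_compSeries (u : MvPowerSeries σ R) :
    logOneSubS u = -compSeries (PowerSeries.mk fun k => (k : ℚ)⁻¹) u := by
  ext m
  change coeff m (-∑ k ∈ Finset.Icc 1 (mdeg m), _) =
    -coeff m (Polynomial.aeval u (PowerSeries.trunc (m.degree + 1) _))
  rw [aeval_trunc, map_neg, Finset.range_eq_Ico, Finset.sum_eq_sum_Ico_succ_bot (Nat.succ_pos _)]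
  simp only [PowerSeries.coeff_mk, Nat.cast_zero, inv_zero, zero_smul, zero_add]
  rfl

theorem derivative_mk_inv :
    PowerSeries.derivative ℚ (PowerSeries.mk fun k => (k : ℚ)⁻¹) = PowerSeries.mk 1 := by
  ext n
  simp [PowerSeries.coeff_derivative]
  field_simp

theorem pderiv_expS (i : σ) {f : MvPowerSeries σ R} (hf : constantCoeff f = 0) :
    pderiv R i (expS f) = expS f * pderiv R i f := by
  rw [expS_eq_compSeries, pderiv_compSeries hf, PowerSeries.derivative_exp]

theorem one_sub_mul_pderiv_logOneSubS (i : σ) {u : MvPowerSeries σ R}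
    (hu : constantCoeff u = 0) : (1 - u) * pderiv R i (logOneSubS u) = -pderiv R i u := by
  rw [logOneSubS_eq_neg_compSeries, map_neg, pderiv_compSeries hu, derivative_mk_inv, mul_neg,
    ← mul_assoc, mul_comm (1 - u), compSeries_mk_one_mul_one_sub hu, one_mul]

theorem X_dvd_compSeries {j : σ} {A : PowerSeries ℚ} (hA : PowerSeries.constantCoeff A = 0)
    {f : MvPowerSeries σ R} (hf : X j ∣ f) : X j ∣ compSeries A f := by
  have hf0 : constantCoeff f = 0 := by
    simpa using X_dvd_iff.mp hf 0 rfl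
  refine X_dvd_iff.mpr fun m hm => ?_
  rw [coeff_compSeries hf0 A (Nat.lt_succ_self _)]
  refine X_dvd_iff.mp (hf.trans ?_) m hm
  obtain ⟨q, hq⟩ := Polynomial.X_dvd_iff.mpr (by simpa [PowerSeries.coeff_trunc] using hA :
    (PowerSeries.trunc (m.degree + 1) A).coeff 0 = 0)
  rw [hq, map_mul, Polynomial.aeval_X]
  exact dvd_mul_right _ _

theorem X_dvd_logOneSubS {j : σ} {u : MvPowerSeries σ R} (hu : X j ∣ u) :
    X j ∣ logOneSubS u := by
  rw [logOneSubS_eq_neg_compSeries]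
  exact (X_dvd_compSeries (by simp) hu).neg_right

end

end MvPowerSeries

section
variable {R : Type*} [CommRing R] [Algebra ℚ R] {Φ : MvPowerSeries (Fin 2) R}
  (hΦ : expS (X 0 + X 1 * Φ) = 1 + X 0 + (X 1 + 1) * Φ)
include hΦ

theorem one_sub_mul_pderiv_zero_of_expS_eq :
    (1 - X 1 * (X 0 + (X 1 + 1) * Φ)) * pderiv R 0 Φ = X 0 + (X 1 + 1) * Φ := by
  have h := pderiv_expS (f := X 0 + X 1 * Φ) 0 (by simp)
  rw [hΦ] at h
  simp only [map_add, Derivation.leibniz, pderiv_one, pderiv_X_self, smul_eq_mul,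
    pderiv_X_of_ne (by decide : (1 : Fin 2) ≠ 0)] at h
  linear_combination h

theorem one_sub_mul_pderiv_one_of_expS_eq :
    (1 - X 1 * (X 0 + (X 1 + 1) * Φ)) * pderiv R 1 Φ = Φ * (X 0 + (X 1 + 1) * Φ) := by
  have h := pderiv_expS (f := X 0 + X 1 * Φ) 1 (by simp)
  rw [hΦ] at h
  simp only [map_add, Derivation.leibniz, pderiv_one, pderiv_X_self, smul_eq_mul,
    pderiv_X_of_ne (by decide : (0 : Fin 2) ≠ 1)] at h
  linear_combination h

theorem pderiv_one_eq_mul_pderiv_zero_of_expS_eq : pderiv R 1 Φ = Φ * pderiv R 0 Φ := by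
  refine (isUnit_one_sub_X_mul 1 (X 0 + (X 1 + 1) * Φ)).mul_left_cancel ?_
  rw [one_sub_mul_pderiv_one_of_expS_eq hΦ, mul_left_comm, one_sub_mul_pderiv_zero_of_expS_eq hΦ]

theorem pderiv_logOneSubS_transport_of_expS_eq :
    pderiv R 1 (logOneSubS (X 1 * (X 0 + (X 1 + 1) * Φ))) -
      Φ * pderiv R 0 (logOneSubS (X 1 * (X 0 + (X 1 + 1) * Φ))) = -pderiv R 0 Φ := by
  have hu : constantCoeff (X 1 * (X 0 + (X 1 + 1) * Φ)) = 0 := by simp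
  have hL₀ := one_sub_mul_pderiv_logOneSubS 0 hu
  have hL₁ := one_sub_mul_pderiv_logOneSubS 1 hu
  simp only [map_add, Derivation.leibniz, pderiv_one, pderiv_X_self, smul_eq_mul,
    pderiv_X_of_ne (by decide : (0 : Fin 2) ≠ 1),
    pderiv_X_of_ne (by decide : (1 : Fin 2) ≠ 0)] at hL₀ hL₁
  refine (isUnit_one_sub_X_mul 1 (X 0 + (X 1 + 1) * Φ)).mul_left_cancel ?_
  linear_combination hL₁ - Φ * hL₀ + one_sub_mul_pderiv_zero_of_expS_eq hΦ -
    X 1 * (X 1 + 1) * pderiv_one_eq_mul_pderiv_zero_of_expS_eq hΦ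

end

/-- Let `Φ` be the unique series with `exp(x + sΦ) = 1 + x + (s+1)Φ`.
If `Ψ₁` satisfies `∂Ψ₁/∂s = ½(∂Φ/∂x + 2Φ·∂Ψ₁/∂x)` with `Ψ₁|_{s=0} = 0`, then
`Ψ₁ = −½·log(1 − s(x + (s+1)Φ))`. -/
theorem stmt17 (Φ Ψ₁ : MvPowerSeries (Fin 2) ℚ)
    (hΦ : expS (MvPowerSeries.X 0 + MvPowerSeries.X 1 * Φ) =
      1 + MvPowerSeries.X 0 + (MvPowerSeries.X 1 + 1) * Φ)
    (heq : pd ℚ 1 Ψ₁ = (2 : ℚ)⁻¹ • (pd ℚ 0 Φ + 2 * Φ * pd ℚ 0 Ψ₁))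
    (hinit : ∀ n : ℕ, MvPowerSeries.coeff (R := ℚ) (Finsupp.single 0 n) Ψ₁ = 0) :
    Ψ₁ = -((2 : ℚ)⁻¹) • logOneSubS (MvPowerSeries.X 1 *
      (MvPowerSeries.X 0 + (MvPowerSeries.X 1 + 1) * Φ)) := by
  rw [pd_eq_pderiv, pd_eq_pderiv] at heq
  have hL := pderiv_logOneSubS_transport_of_expS_eq hΦ
  -- keeps the `simp only` below from rewriting inside the argument of `logOneSubS`
  set L := logOneSubS (X 1 * (X 0 + (X 1 + 1) * Φ))
  rw [← sub_eq_zero]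
  refine eq_zero_of_pderiv_eq_mul_pderiv (Φ := Φ) (by decide : (0 : Fin 2) ≠ 1) ?_ ?_
  · simp only [map_sub, Derivation.map_smul, heq, mul_sub, mul_smul_comm, two_mul, add_mul]
    linear_combination (norm := module) (2⁻¹ : ℚ) • hL
  · refine dvd_sub (X_dvd_iff.mpr fun m hm => ?_) (dvd_smul_of_dvd _ (X_dvd_logOneSubS ?_))
    · have hm0 : m = single 0 (m 0) := by ext a; fin_cases a <;> simp [hm]
      rw [hm0, hinit]
    · exact dvd_mul_right _ _
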